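/- arXiv:2401.16178 — 5 statements merged into one kernel-verified Lean document; each statement's English description precedes it below -/
import Mathlib

section
/- Let L(t) be the (n+1)×(n+1) lower-triangular matrix with entries L(t)_{i,j} = B^i_j(t) = C(i,j) t^j (1-t)^{i-j} for j ≤ i, and 0 otherwise. Then for each j ∈ {0,…,n}, the vector v_j with components (v_j)_i = C(i,j) is an eigenvector of L(t) with eigenvalue t^j; that is, ∑_k B^i_k(t) C(k,j) = t^j C(i,j) for all i. -/
/-- Bernstein basis polynomial `B^n_j(t) = C(n,j) t^j (1-t)^{n-j}` over a commutative ring. -/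
def bernstein' {R : Type*} [CommRing R] (t : R) (n j : ℕ) : R :=
  (Nat.choose n j : R) * t ^ j * (1 - t) ^ (n - j)

/-!
Since `C(i,k) C(k,j) = C(i,j) C(i-j,k-j)`, the sum `∑ₖ B^i_k(t) C(k,j)` equals
`t^j C(i,j) ∑ₘ B^{i-j}_m(t)`, and the Bernstein polynomials of degree `i - j` sum to `1`.
-/

open Finset

section

variable {R : Type*} [CommRing R] (t : R)

theorem bernstein'_eq_eval (n j : ℕ) : bernstein' t n j = (bernsteinPolynomial R n j).eval t := by
  simp [bernstein', bernsteinPolynomial]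

theorem bernstein'_eq_zero_of_lt {n j : ℕ} (h : n < j) : bernstein' t n j = 0 := by
  rw [bernstein'_eq_eval, bernsteinPolynomial.eq_zero_of_lt R h, Polynomial.eval_zero]

theorem sum_range_bernstein' {n N : ℕ} (h : n ≤ N) :
    ∑ k ∈ range (N + 1), bernstein' t n k = 1 := by
  have hsub : range (n + 1) ⊆ range (N + 1) := range_subset_range.mpr (by omega)
  rw [← sum_subset hsub fun k _ hk => bernstein'_eq_zero_of_lt t (by simpa using hk)]
  simp_rw [bernstein'_eq_eval, ← Polynomial.eval_finsetSum, bernsteinPolynomial.sum,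
    Polynomial.eval_one]

theorem bernstein'_add_mul_choose (i j m : ℕ) :
    bernstein' t i (j + m) * (Nat.choose (j + m) j : R)
      = t ^ j * (Nat.choose i j : R) * bernstein' t (i - j) m := by
  have hchoose : (Nat.choose i (j + m) : R) * Nat.choose (j + m) j
      = Nat.choose i j * Nat.choose (i - j) m := by
    rw [← Nat.cast_mul, Nat.choose_mul (Nat.le_add_right j m), Nat.add_sub_cancel_left,
      Nat.cast_mul]
  have hsub : i - (j + m) = i - j - m := by omega
  simp only [bernstein', hsub, pow_add]
  linear_combination (t ^ j * t ^ m * (1 - t) ^ (i - j - m)) * hchoose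

theorem sum_range_bernstein'_mul_choose {n i j : ℕ} (hi : i ≤ n) (hj : j ≤ n) :
    ∑ k ∈ range (n + 1), bernstein' t i k * (Nat.choose k j : R)
      = t ^ j * (Nat.choose i j : R) :=
  calc ∑ k ∈ range (n + 1), bernstein' t i k * (Nat.choose k j : R)
      = ∑ k ∈ range j, bernstein' t i k * (Nat.choose k j : R)
          + ∑ m ∈ range (n - j + 1), bernstein' t i (j + m) * (Nat.choose (j + m) j : R) := by
        rw [← sum_range_add, show j + (n - j + 1) = n + 1 by omega]
    _ = ∑ m ∈ range (n - j + 1), t ^ j * (Nat.choose i j : R) * bernstein' t (i - j) m := by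
        rw [sum_eq_zero fun k hk => by simp [Nat.choose_eq_zero_of_lt (mem_range.mp hk)],
          zero_add]
        simp_rw [bernstein'_add_mul_choose]
    _ = t ^ j * (Nat.choose i j : R) := by
        rw [← mul_sum, sum_range_bernstein' t (by omega), mul_one]

end

theorem deCasteljau_left_eigenvectors {R : Type*} [CommRing R] (t : R) (n : ℕ)
    (j : Fin (n + 1)) (i : Fin (n + 1)) :
    ∑ k : Fin (n + 1), bernstein' t i.1 k.1 * (Nat.choose k.1 j.1 : R)
      = t ^ j.1 * (Nat.choose i.1 j.1 : R) := by
  rw [Fin.sum_univ_eq_sum_range (fun k => bernstein' t i.1 k * (Nat.choose k j.1 : R))]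
  exact sum_range_bernstein'_mul_choose t (Nat.lt_succ_iff.mp i.2) (Nat.lt_succ_iff.mp j.2)
end

section
/- Let S be the (n+1)×(n+1) matrix with S_{i,j} = C(i,j), and L(t) the de Casteljau left subdivision matrix with L(t)_{i,j} = C(i,j) t^j (1-t)^{i-j}. Then S⁻¹ L(t) S is the diagonal matrix with diagonal entries 1, t, t², …, t^n; equivalently (S⁻¹ L(t) S)_{i,j} = δ_{i,j} t^i. -/
/-!
Both identities reduce to one sum: by trinomial revision `C(i,k) C(k,j) = C(i,j) C(i-j,k-j)` and
the binomial theorem, `∑ₖ C(i,k) C(k,j) x^k y^(i-k) = C(i,j) x^j (x+y)^(i-j)`.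
With `(x, y) = (t, 1-t)` it says `L(t) S = S D(t)` for `D(t) = diag(1, t, …, tⁿ)`, and with
`(x, y) = (-1, 1)` it says `S⁻¹ S = 1`; hence `S⁻¹ L(t) S = S⁻¹ S D(t) = D(t)`.
-/

open Matrix

open Finset in
theorem sum_choose_mul_choose_mul_pow_mul_pow {R : Type*} [CommSemiring R] (x y : R)
    {i n : ℕ} (j : ℕ) (hi : i < n) :
    ∑ k ∈ range n, (i.choose k : R) * k.choose j * x ^ k * y ^ (i - k)
      = i.choose j * x ^ j * (x + y) ^ (i - j) := by
  rw [← sum_subset (range_subset_range.mpr hi) fun k _ hk => by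
    rw [Nat.choose_eq_zero_of_lt (by simpa using hk)]; simp]
  rcases le_or_gt j i with hj | hj
  · obtain ⟨m, rfl⟩ := Nat.exists_eq_add_of_le hj
    rw [Nat.succ_eq_add_one, add_assoc, sum_range_add, sum_eq_zero fun k hk => by
        rw [Nat.choose_eq_zero_of_lt (mem_range.mp hk)]; simp,
      zero_add, Nat.add_sub_cancel_left, add_pow, mul_sum]
    refine sum_congr rfl fun r hr => ?_
    have hrev := Nat.choose_mul (n := j + m) (k := j + r) (s := j) (Nat.le_add_right j r)
    simp only [Nat.add_sub_cancel_left] at hrev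
    rw [Nat.add_sub_add_left, ← Nat.cast_mul, hrev, Nat.cast_mul, pow_add]
    ring
  · rw [Nat.choose_eq_zero_of_lt hj, Nat.cast_zero, zero_mul, zero_mul]
    refine sum_eq_zero fun k hk => ?_
    rw [Nat.choose_eq_zero_of_lt (by rw [mem_range] at hk; omega : k < j)]
    simp

namespace Matrix

variable (n : ℕ) (R : Type*) [CommRing R]

def pascal : Matrix (Fin n) (Fin n) R :=
  of fun i j => (Nat.choose i.1 j.1 : R)

def pascalInv : Matrix (Fin n) (Fin n) R :=
  of fun i j => (-1 : R) ^ (i.1 + j.1) * (Nat.choose i.1 j.1 : R)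

variable {n R}

def deCasteljauLeft (t : R) : Matrix (Fin n) (Fin n) R :=
  of fun i j => (Nat.choose i.1 j.1 : R) * t ^ j.1 * (1 - t) ^ (i.1 - j.1)

theorem pascalInv_mul_pascal : pascalInv n R * pascal n R = 1 := by
  ext i j
  have hsum := sum_choose_mul_choose_mul_pow_mul_pow (-1 : R) 1 j.1 i.2
  rw [neg_add_cancel] at hsum
  calc (pascalInv n R * pascal n R) i j
      = (-1) ^ i.1 * ∑ k ∈ Finset.range n,
          (i.1.choose k : R) * k.choose j.1 * (-1) ^ k * 1 ^ (i.1 - k) := by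
        simp only [mul_apply, pascalInv, pascal, of_apply, Finset.mul_sum]
        refine (Fin.sum_univ_eq_sum_range (fun k => (-1 : R) ^ (i.1 + k) * i.1.choose k *
          k.choose j.1) n).trans (Finset.sum_congr rfl fun k _ => ?_)
        rw [pow_add]; ring
    _ = (1 : Matrix (Fin n) (Fin n) R) i j := by
        rw [hsum, one_apply]
        rcases lt_trichotomy i j with hij | rfl | hij
        · rw [Nat.choose_eq_zero_of_lt hij, if_neg hij.ne]; simp
        · rw [Nat.choose_self, Nat.sub_self, if_pos rfl]
          simp only [Nat.cast_one, pow_zero, mul_one, one_mul]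
          rw [← pow_add, Even.neg_one_pow ⟨_, rfl⟩]
        · rw [zero_pow (Nat.sub_ne_zero_of_lt hij), if_neg hij.ne']; simp

theorem deCasteljauLeft_mul_pascal (t : R) :
    deCasteljauLeft t * pascal n R = pascal n R * diagonal fun i => t ^ i.1 := by
  ext i j
  have hsum := sum_choose_mul_choose_mul_pow_mul_pow t (1 - t) j.1 i.2
  rw [add_sub_cancel, one_pow, mul_one] at hsum
  rw [mul_diagonal, mul_apply]
  simp only [deCasteljauLeft, pascal, of_apply]
  rw [← hsum]
  refine (Fin.sum_univ_eq_sum_range (fun k => (i.1.choose k : R) * t ^ k * (1 - t) ^ (i.1 - k) *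
    k.choose j.1) n).trans (Finset.sum_congr rfl fun k _ => by ring)

theorem pascalInv_mul_deCasteljauLeft_mul_pascal (t : R) :
    pascalInv n R * deCasteljauLeft t * pascal n R = diagonal fun i => t ^ i.1 := by
  rw [Matrix.mul_assoc, deCasteljauLeft_mul_pascal, ← Matrix.mul_assoc, pascalInv_mul_pascal,
    Matrix.one_mul]

end Matrix

theorem deCasteljau_left_diagonalized {R : Type*} [CommRing R] (t : R) (n : ℕ) :
    let S : Matrix (Fin (n + 1)) (Fin (n + 1)) R :=
      fun i j => (Nat.choose i.1 j.1 : R)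
    let Sinv : Matrix (Fin (n + 1)) (Fin (n + 1)) R :=
      fun i j => (-1 : R) ^ (i.1 + j.1) * (Nat.choose i.1 j.1 : R)
    let L : Matrix (Fin (n + 1)) (Fin (n + 1)) R :=
      fun i j => (Nat.choose i.1 j.1 : R) * t ^ j.1 * (1 - t) ^ (i.1 - j.1)
    ∀ i j : Fin (n + 1),
      (Sinv * L * S) i j = if i = j then t ^ i.1 else 0 := by
  intro S Sinv L i j
  exact (congrFun (congrFun (pascalInv_mul_deCasteljauLeft_mul_pascal t) i) j).trans
    (diagonal_apply _ i j)
end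

section
/- Let S be the (n+1)×(n+1) matrix with S_{i,j} = C(i,j), and R(t) the de Casteljau right subdivision matrix with R(t)_{i,j} = B^{n-i}_{j-i}(t) = C(n-i, j-i) t^{j-i} (1-t)^{n-j} for j ≥ i, and 0 otherwise. Then (S⁻¹ R(t) S)_{i,j} = C(n-i, n-j) t^{j-i} (1-t)^i for all i,j ∈ {0,…,n}; in particular S⁻¹ R(t) S is upper-triangular with diagonal entries (1-t)^i. -/
open Matrix Polynomial Finset

private lemma coeff_B {R : Type*} [CommRing R] (t : R) (m d : ℕ) :
    ((C t * X + 1 : R[X]) ^ m).coeff d = t ^ d * (m.choose d : R) := by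
  rw [add_pow, finset_sum_coeff]
  have h : ∀ r ∈ range (m+1), ((C t * X)^r * 1^(m-r) * ((m.choose r : ℕ) : R[X])).coeff d
      = if d = r then t ^ d * (m.choose d : R) else 0 := by
    intro r _
    rw [one_pow, mul_one, mul_pow, ← C_pow, ← C_eq_natCast, mul_right_comm, ← C_mul,
      coeff_C_mul, coeff_X_pow]
    split_ifs with h
    · subst h; ring
    · simp
  rw [Finset.sum_congr rfl h, Finset.sum_ite_eq]
  split_ifs with hd
  · rfl
  · rw [Nat.choose_eq_zero_of_lt (by simpa using hd)]
    simp

private lemma step1 {R : Type*} [CommRing R] (t : R) (n k j : ℕ) (hk : k ≤ n) :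
    ∑ l ∈ range (n+1),
      (if k ≤ l then ((n-k).choose (l-k) : R) * t^(l-k) * (1-t)^(n-l) else 0) * (l.choose j : R)
      = ((X + 1 : R[X])^k * (C t * X + 1)^(n-k)).coeff j := by
  rw [Finset.range_eq_Ico,
    ← Finset.sum_Ico_consecutive _ (Nat.zero_le k) (show k ≤ n+1 by omega)]
  have h0 : (∑ l ∈ Ico 0 k,
      (if k ≤ l then ((n-k).choose (l-k) : R) * t^(l-k) * (1-t)^(n-l) else 0) * (l.choose j : R)) = 0 := by
    refine Finset.sum_eq_zero fun l hl => ?_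
    rw [if_neg (by simp at hl; omega), zero_mul]
  rw [h0, zero_add, Finset.sum_Ico_eq_sum_range,
    show n + 1 - k = n - k + 1 from by omega]
  have hB : (C t * X + 1 : R[X]) = C t * (X + 1) + C (1 - t) := by
    rw [map_sub, C_1]; ring
  rw [hB, add_pow (C t * (X + 1) : R[X]) (C (1 - t)) (n - k), Finset.mul_sum, finset_sum_coeff]
  refine Finset.sum_congr rfl fun r hr => ?_
  simp only [Finset.mem_range] at hr
  have hterm : ((X + 1 : R[X]) ^ k * ((C t * (X + 1)) ^ r * C (1 - t) ^ (n - k - r) *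
        (((n - k).choose r : ℕ) : R[X])))
      = C (t ^ r * (1 - t) ^ (n - k - r) * (((n - k).choose r : R))) * (X + 1) ^ (k + r) := by
    rw [mul_pow, ← C_pow, ← C_pow, ← C_eq_natCast, C_mul, C_mul]; ring
  rw [hterm, coeff_C_mul, coeff_X_add_one_pow,
    if_pos (Nat.le_add_right k r), Nat.add_sub_cancel_left,
    show n - (k + r) = n - k - r from by omega]
  ring

private lemma step2 {R : Type*} [CommRing R] (t : R) (n i : ℕ) (hi : i ≤ n) :
    ∑ k ∈ range (n+1), C ((-1:R)^(i+k) * (i.choose k : R)) *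
        ((X+1:R[X])^k * (C t * X + 1)^(n-k))
      = C ((1-t)^i) * X^i * (C t * X + 1)^(n-i) := by
  rw [← Finset.sum_subset (Finset.range_subset_range.2 (show i+1 ≤ n+1 by omega))
    (fun x _ hx => by
      simp only [Finset.mem_range, not_lt] at hx
      rw [Nat.choose_eq_zero_of_lt (by omega)]
      simp)]
  have hfac : (C ((1-t)^i) * X^i : R[X]) = ((X + 1) + -(C t * X + 1))^i := by
    rw [show ((X + 1) + -(C t * X + 1) : R[X]) = C (1-t) * X from by
      rw [map_sub, C_1]; ring, mul_pow, C_pow]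
  rw [hfac, add_pow (X + 1 : R[X]) (-(C t * X + 1)) i, Finset.sum_mul]
  refine Finset.sum_congr rfl fun k hk => ?_
  simp only [Finset.mem_range] at hk
  have hsgn : (-1:R)^(i+k) = (-1:R)^(i-k) := by
    rw [show i + k = (i-k) + 2*k from by omega, pow_add, pow_mul]
    simp
  rw [hsgn, show n - k = (i - k) + (n - i) from by omega, pow_add]
  simp only [C_mul, C_pow, C_neg, C_1, one_pow, C_eq_natCast, neg_pow (C t * X + 1 : R[X])]
  ring

theorem deCasteljau_right_triangularized {R : Type*} [CommRing R] (t : R) (n : ℕ) :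
    let S : Matrix (Fin (n + 1)) (Fin (n + 1)) R :=
      fun i j => (Nat.choose i.1 j.1 : R)
    let Sinv : Matrix (Fin (n + 1)) (Fin (n + 1)) R :=
      fun i j => (-1 : R) ^ (i.1 + j.1) * (Nat.choose i.1 j.1 : R)
    let Rt : Matrix (Fin (n + 1)) (Fin (n + 1)) R :=
      fun i j => if i.1 ≤ j.1 then
        (Nat.choose (n - i.1) (j.1 - i.1) : R) * t ^ (j.1 - i.1) * (1 - t) ^ (n - j.1)
      else 0
    ∀ i j : Fin (n + 1),
      (Sinv * Rt * S) i j
        = (Nat.choose (n - i.1) (n - j.1) : R) * t ^ (j.1 - i.1) * (1 - t) ^ i.1 := by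
  intro S Sinv Rt i j
  have hi : i.1 ≤ n := by omega
  have hj : j.1 ≤ n := by omega
  have hRS : ∀ k : Fin (n+1), (Rt * S) k j
      = ((X + 1 : R[X]) ^ k.1 * (C t * X + 1) ^ (n - k.1)).coeff j.1 := by
    intro k
    rw [mul_apply, ← step1 t n k.1 j.1 (by omega),
      ← Fin.sum_univ_eq_sum_range (fun l =>
        (if k.1 ≤ l then ((n - k.1).choose (l - k.1) : R) * t ^ (l - k.1) *
          (1 - t) ^ (n - l) else 0) * ((l).choose j.1 : R)) (n+1)]
  rw [mul_assoc, mul_apply]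
  calc ∑ k, Sinv i k * (Rt * S) k j
      = ∑ k ∈ range (n+1), ((-1:R) ^ (i.1 + k) * (i.1.choose k : R)) *
          ((X + 1 : R[X]) ^ k * (C t * X + 1) ^ (n - k)).coeff j.1 := by
        simp only [hRS]
        exact Fin.sum_univ_eq_sum_range (fun k => ((-1:R) ^ (i.1 + k) * (i.1.choose k : R)) *
          ((X + 1 : R[X]) ^ k * (C t * X + 1) ^ (n - k)).coeff j.1) (n+1)
    _ = (∑ k ∈ range (n+1), C ((-1:R) ^ (i.1 + k) * (i.1.choose k : R)) *
          ((X + 1 : R[X]) ^ k * (C t * X + 1) ^ (n - k))).coeff j.1 := by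
        rw [finset_sum_coeff]
        exact Finset.sum_congr rfl fun k _ => (coeff_C_mul _).symm
    _ = (C ((1 - t) ^ i.1) * X ^ i.1 * (C t * X + 1) ^ (n - i.1)).coeff j.1 := by
        rw [step2 t n i.1 hi]
    _ = ((n - i.1).choose (n - j.1) : R) * t ^ (j.1 - i.1) * (1 - t) ^ i.1 := by
        rw [mul_assoc, coeff_C_mul, mul_comm (X ^ i.1 : R[X]), coeff_mul_X_pow']
        by_cases hij : i.1 ≤ j.1
        · rw [if_pos hij, coeff_B,
            show n - j.1 = (n - i.1) - (j.1 - i.1) from by omega,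
            Nat.choose_symm (by omega)]
          ring
        · rw [if_neg hij, Nat.choose_eq_zero_of_lt (by omega)]
          simp
end

section
/- Let A₀ and A₁ be n×n complex matrices that are simultaneously upper-triangularizable: there is an invertible matrix S such that S⁻¹A₀S and S⁻¹A₁S are both upper-triangular. If the spectral radii of A₀ and A₁ are both strictly less than 1, then every infinite product A_{d₁} A_{d₂} ⋯ A_{d_n} (d_k ∈ {0,1}) converges to the zero matrix as n → ∞; equivalently, for every ε > 0 there is N such that ‖A_{d₁}⋯A_{d_n}‖ < ε for all n ≥ N and all choices of indices d_k ∈ {0,1}. -/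
/-!
Conjugating the common triangular forms `B_k = S⁻¹ A_k S` further by `diag(1, t, t², …)`
multiplies the `(i, j)` entry by `t ^ (j - i)`: the diagonal, which consists of eigenvalues of
modulus `< 1`, is unchanged, while the entries above it shrink. For a small `t ≠ 0`, both
conjugated matrices therefore have max-row-sum norm at most some `ρ < 1`, and a product of `m`
factors `A_{d_k}` has norm at most `‖P‖ ‖P⁻¹‖ ρ ^ m`, where `P = S · diag(1, t, t², …)`,
whatever the indices `d_k` are.
-/

open Matrix Filter Topology

attribute [local instance] Matrix.linftyOpSeminormedAddCommGroup Matrix.linftyOpNormedRing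

theorem list_prod_map_units_conj {M ι : Type*} [Monoid M] (u : Mˣ) (f : ι → M) (l : List ι) :
    (l.map fun k => ↑u⁻¹ * f k * ↑u).prod = ↑u⁻¹ * (l.map f).prod * ↑u := by
  induction l with
  | nil => simp
  | cons a l ih =>
    rw [List.map_cons, List.prod_cons, ih, List.map_cons, List.prod_cons]
    simp only [mul_assoc, Units.mul_inv_cancel_left]

theorem norm_mul_list_prod_le {R : Type*} [SeminormedRing R] (x : R) {l : List R} {ρ : ℝ}
    (hl : ∀ a ∈ l, ‖a‖ ≤ ρ) : ‖x * l.prod‖ ≤ ‖x‖ * ρ ^ l.length := by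
  induction l generalizing x with
  | nil => simp
  | cons a l ih =>
    have ha : ‖a‖ ≤ ρ := hl a List.mem_cons_self
    calc ‖x * (a :: l).prod‖ = ‖x * a * l.prod‖ := by rw [List.prod_cons, mul_assoc]
      _ ≤ ‖x * a‖ * ρ ^ l.length := ih _ fun b hb => hl b (List.mem_cons_of_mem a hb)
      _ ≤ ‖x‖ * ρ * ρ ^ l.length :=
        mul_le_mul_of_nonneg_right ((norm_mul_le x a).trans (by gcongr))
          (pow_nonneg ((norm_nonneg a).trans ha) _)
      _ = ‖x‖ * ρ ^ (a :: l).length := by rw [List.length_cons, pow_succ', mul_assoc]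

theorem norm_list_prod_map_le_of_units_conj {R ι : Type*} [SeminormedRing R] (u : Rˣ)
    {f : ι → R} {ρ : ℝ} (hf : ∀ k, ‖↑u⁻¹ * f k * ↑u‖ ≤ ρ) (l : List ι) :
    ‖(l.map f).prod‖ ≤ ‖(u : R)‖ * ‖(↑u⁻¹ : R)‖ * ρ ^ l.length := by
  have hconj : (l.map f).prod = ↑u * (l.map fun k => ↑u⁻¹ * f k * ↑u).prod * ↑u⁻¹ := by
    rw [list_prod_map_units_conj, ← mul_assoc, ← mul_assoc, Units.mul_inv, one_mul, mul_assoc,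
      Units.mul_inv, mul_one]
  calc ‖(l.map f).prod‖ ≤ ‖↑u * (l.map fun k => ↑u⁻¹ * f k * ↑u).prod‖ * ‖(↑u⁻¹ : R)‖ := by
        rw [hconj]; exact norm_mul_le _ _
    _ ≤ ‖(u : R)‖ * ρ ^ l.length * ‖(↑u⁻¹ : R)‖ := by
        gcongr
        simpa only [List.length_map] using norm_mul_list_prod_le (u : R)
          (l := l.map fun k => ↑u⁻¹ * f k * ↑u) (List.forall_mem_map.2 fun k _ => hf k)
    _ = _ := mul_right_comm _ _ _

namespace Matrix

theorem IsUpperTriangular.diag_mem_spectrum {m R : Type*} [Fintype m] [DecidableEq m]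
    [LinearOrder m] [CommRing R] [Nontrivial R] {M : Matrix m m R} (h : M.IsUpperTriangular)
    (i : m) : M i i ∈ spectrum R M :=
  mem_spectrum_of_isRoot_charpoly <| by
    simp only [charpoly_of_isUpperTriangular M h, Polynomial.IsRoot, Polynomial.eval_prod,
      Polynomial.eval_sub, Polynomial.eval_X, Polynomial.eval_C]
    exact Finset.prod_eq_zero (Finset.mem_univ i) (sub_self _)

section LinftyOpNorm

variable {m n α : Type*} [Fintype m] [Fintype n] [SeminormedAddCommGroup α]

theorem sum_norm_le_linfty_opNorm (A : Matrix m n α) (i : m) : ∑ j, ‖A i j‖ ≤ ‖A‖ := by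
  change _ ≤ ‖fun i => WithLp.toLp 1 (A i)‖
  simpa [PiLp.norm_eq_of_L1] using norm_le_pi_norm (fun i => WithLp.toLp 1 (A i)) i

theorem norm_entry_le_linfty_opNorm (A : Matrix m n α) (i : m) (j : n) : ‖A i j‖ ≤ ‖A‖ :=
  (Finset.single_le_sum (fun j _ => norm_nonneg (A i j)) (Finset.mem_univ j)).trans
    (sum_norm_le_linfty_opNorm A i)

theorem linfty_opNorm_le_of_sum_norm_le (A : Matrix m n α) {c : ℝ} (hc : 0 ≤ c)
    (h : ∀ i, ∑ j, ‖A i j‖ ≤ c) : ‖A‖ ≤ c := by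
  change ‖fun i => WithLp.toLp 1 (A i)‖ ≤ c
  exact (pi_norm_le_iff_of_nonneg hc).2 fun i => by simpa [PiLp.norm_eq_of_L1] using h i

end LinftyOpNorm

section DiagonalScaling

def diagPow {R : Type*} [CommRing R] (n : ℕ) (t : R) : Matrix (Fin n) (Fin n) R :=
  diagonal fun i => t ^ (i : ℕ)

variable {R : Type*} [CommRing R] {n : ℕ}

theorem diagPow_mul_diagPow (s t : R) : diagPow n s * diagPow n t = diagPow n (s * t) := by
  simp [diagPow, diagonal_mul_diagonal, mul_pow]

theorem diagPow_one : diagPow n (1 : R) = 1 := by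
  simp [diagPow]

theorem diagPow_mul_mul_diagPow_apply (s t : R) (B : Matrix (Fin n) (Fin n) R) (i j : Fin n) :
    (diagPow n s * B * diagPow n t) i j = s ^ (i : ℕ) * B i j * t ^ (j : ℕ) := by
  simp [diagPow, diagonal_mul, mul_diagonal]

theorem diagPow_inv_mul_mul_diagPow_apply_of_le {K : Type*} [Field K] {t : K} (ht : t ≠ 0)
    (B : Matrix (Fin n) (Fin n) K) {i j : Fin n} (hij : i ≤ j) :
    (diagPow n t⁻¹ * B * diagPow n t) i j = t ^ ((j : ℕ) - i) * B i j := by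
  obtain ⟨k, hk⟩ := Nat.exists_eq_add_of_le (Fin.le_def.1 hij)
  have hcancel : t⁻¹ ^ (i : ℕ) * t ^ (i : ℕ) = 1 := by
    rw [inv_pow, inv_mul_cancel₀ (pow_ne_zero _ ht)]
  rw [diagPow_mul_mul_diagPow_apply, hk, Nat.add_sub_cancel_left, pow_add]
  linear_combination (B i j * t ^ k) * hcancel

end DiagonalScaling

variable {𝕜 : Type*} {n : ℕ}

theorem sum_norm_diagPow_conj_apply_le [NormedField 𝕜] {t : 𝕜} (ht0 : t ≠ 0) (ht1 : ‖t‖ ≤ 1)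
    {B : Matrix (Fin n) (Fin n) 𝕜} (hB : B.IsUpperTriangular) (i : Fin n) :
    ∑ j, ‖(diagPow n t⁻¹ * B * diagPow n t) i j‖ ≤ ‖B i i‖ + ‖t‖ * ∑ j, ‖B i j‖ := by
  have hdiag := diagPow_inv_mul_mul_diagPow_apply_of_le ht0 B (le_refl i)
  rw [Nat.sub_self, pow_zero, one_mul] at hdiag
  have hoff : ∀ j ∈ Finset.univ.erase i,
      ‖(diagPow n t⁻¹ * B * diagPow n t) i j‖ ≤ ‖t‖ * ‖B i j‖ := by
    intro j hj
    rcases lt_or_gt_of_ne (Finset.ne_of_mem_erase hj) with hji | hij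
    · rw [diagPow_mul_mul_diagPow_apply, hB hji]
      simp
    · rw [diagPow_inv_mul_mul_diagPow_apply_of_le ht0 B hij.le, norm_mul, norm_pow]
      gcongr
      exact pow_le_of_le_one (norm_nonneg _) ht1 (Nat.sub_ne_zero_of_lt hij)
  rw [← Finset.add_sum_erase _ _ (Finset.mem_univ i), hdiag, Finset.mul_sum]
  gcongr ‖B i i‖ + ?_
  exact (Finset.sum_le_sum hoff).trans
    (Finset.sum_le_sum_of_subset_of_nonneg (Finset.erase_subset i _) fun j _ _ => by positivity)

theorem linfty_opNorm_diagPow_conj_le [NormedField 𝕜] {t : 𝕜} (ht0 : t ≠ 0) (ht1 : ‖t‖ ≤ 1)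
    {B : Matrix (Fin n) (Fin n) 𝕜} (hB : B.IsUpperTriangular) {c : ℝ} (hc0 : 0 ≤ c)
    (hc : ∀ i, ‖B i i‖ + ‖t‖ * ‖B‖ ≤ c) : ‖diagPow n t⁻¹ * B * diagPow n t‖ ≤ c :=
  linfty_opNorm_le_of_sum_norm_le _ hc0 fun i =>
    (sum_norm_diagPow_conj_apply_le ht0 ht1 hB i).trans <| le_trans
      (by gcongr; exact sum_norm_le_linfty_opNorm B i) (hc i)

theorem exists_units_conj_norm_le_of_isUpperTriangular [NontriviallyNormedField 𝕜]
    {ι : Type*} [Finite ι] {B : ι → Matrix (Fin n) (Fin n) 𝕜}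
    (hB : ∀ k, (B k).IsUpperTriangular) (hdiag : ∀ k i, ‖B k i i‖ < 1) :
    ∃ ρ, 0 ≤ ρ ∧ ρ < 1 ∧ ∃ D : (Matrix (Fin n) (Fin n) 𝕜)ˣ, ∀ k,
      ‖(↑D⁻¹ : Matrix (Fin n) (Fin n) 𝕜) * B k * D‖ ≤ ρ := by
  obtain ⟨ρ, ⟨hρ0, hρ1⟩, hρ⟩ : ∃ ρ ∈ Set.Ico (0 : ℝ) 1, ∀ k i, ‖B k i i‖ < ρ :=
    (Eventually.and (Ico_mem_nhdsLT zero_lt_one) <| eventually_nhdsWithin_of_eventually_nhds <|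
      eventually_all.2 fun k => eventually_all.2 fun i => eventually_gt_nhds (hdiag k i)).exists
  have hsmall : ∀ᶠ t in 𝓝 (0 : 𝕜), ‖t‖ < 1 ∧ ∀ k i, ‖B k i i‖ + ‖t‖ * ‖B k‖ < ρ := by
    refine ((continuous_norm.tendsto' 0 0 norm_zero).eventually_lt_const zero_lt_one).and
      (eventually_all.2 fun k => eventually_all.2 fun i => ?_)
    refine Tendsto.eventually_lt_const (by simpa using hρ k i) ?_
    exact (continuous_const.add (continuous_norm.mul continuous_const)).tendsto' 0 _ (by simp)
  obtain ⟨t, ⟨ht1, htρ⟩, ht0⟩ :=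
    ((hsmall.filter_mono nhdsWithin_le_nhds).and (self_mem_nhdsWithin (s := {0}ᶜ))).exists
  refine ⟨ρ, hρ0, hρ1, ⟨diagPow n t, diagPow n t⁻¹, ?_, ?_⟩, fun k => ?_⟩
  · rw [diagPow_mul_diagPow, mul_inv_cancel₀ ht0, diagPow_one]
  · rw [diagPow_mul_diagPow, inv_mul_cancel₀ ht0, diagPow_one]
  · show ‖diagPow n t⁻¹ * B k * diagPow n t‖ ≤ ρ
    exact linfty_opNorm_diagPow_conj_le ht0 ht1.le (hB k) hρ0 fun i => (htρ k i).le

end Matrix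

theorem joint_products_tend_to_zero (n : ℕ) (A : Fin 2 → Matrix (Fin n) (Fin n) ℂ)
    (S : Matrix (Fin n) (Fin n) ℂ) (hS : IsUnit S)
    (htri : ∀ k : Fin 2, (S⁻¹ * A k * S).BlockTriangular id)
    (hspec : ∀ k : Fin 2, ∀ μ ∈ spectrum ℂ (A k), ‖μ‖ < 1) :
    ∀ ε > (0 : ℝ), ∃ N : ℕ, ∀ m ≥ N, ∀ d : ℕ → Fin 2, ∀ i j : Fin n,
      ‖(((List.range m).map fun k => A (d k)).prod) i j‖ < ε := by
  have hconj : ∀ k, S⁻¹ * A k * S = (↑hS.unit⁻¹ : Matrix (Fin n) (Fin n) ℂ) * A k * hS.unit :=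
    fun k => by rw [coe_units_inv, hS.unit_spec]
  have hdiag : ∀ k i, ‖(S⁻¹ * A k * S) i i‖ < 1 := fun k i => hspec k _ <| by
    simpa only [hconj, spectrum.units_conjugate'] using
      IsUpperTriangular.diag_mem_spectrum (htri k) i
  obtain ⟨ρ, hρ0, hρ1, D, hD⟩ := exists_units_conj_norm_le_of_isUpperTriangular htri hdiag
  obtain ⟨P, hPdef⟩ : ∃ P, P = hS.unit * D := ⟨_, rfl⟩
  have hP : ∀ k, ‖(↑P⁻¹ : Matrix (Fin n) (Fin n) ℂ) * A k * P‖ ≤ ρ := fun k => by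
    simpa only [hPdef, hconj, _root_.mul_inv_rev, Units.val_mul, mul_assoc] using hD k
  intro ε hε
  have hlim := (tendsto_pow_atTop_nhds_zero_of_lt_one hρ0 hρ1).const_mul
    (‖(P : Matrix (Fin n) (Fin n) ℂ)‖ * ‖(↑P⁻¹ : Matrix (Fin n) (Fin n) ℂ)‖)
  obtain ⟨N, hN⟩ := eventually_atTop.1 (hlim.eventually (gt_mem_nhds (by simpa using hε)))
  refine ⟨N, fun m hm d i j => ?_⟩
  calc ‖(((List.range m).map fun k => A (d k)).prod) i j‖
      ≤ ‖((List.range m).map fun k => A (d k)).prod‖ := norm_entry_le_linfty_opNorm _ i j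
    _ ≤ _ := by
        simpa only [List.map_map, List.length_map, List.length_range, Function.comp_def] using
          norm_list_prod_map_le_of_units_conj P hP ((List.range m).map d)
    _ < ε := hN m hm
end

section
/- Let d₁, d₂, … ∈ {0,1}, and for n ≥ 0 set r_n = ∑_{k=1}^n d_k/2^k and u_n = ∑_{k=1}^n d_k. Then for every m ≥ n: T(r_n + 2^{-m}) - T(r_n) = (m - 2u_n)/2^m, where T is the Takagi function. -/
noncomputable def distNearestInt (x : ℝ) : ℝ := ⨅ n : ℤ, |x - (n : ℝ)|

noncomputable def takagi (x : ℝ) : ℝ := ∑' j : ℕ, distNearestInt (2 ^ j * x) / 2 ^ j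

/-!
The Takagi function satisfies `T x = σ x + T (2x) / 2` and is `1`-periodic. Write
`r_n = (d₁ + r') / 2`, where `r'` is the prefix of length `n - 1` of the shifted digit sequence
(and `r' = 0` when `n = 0`). Then `r_n` and `r_n + 2^{-m}` lie in the half-interval
`[d₁/2, (d₁+1)/2]`, on which `σ` has slope `1 - 2d₁`, so the increment at scale `2^{-m}` is
`(1 - 2d₁) 2^{-m}` plus half the increment of `T` at `r'` at scale `2^{-(m-1)}`.
Induction on `m` gives `(m - 2u_n) / 2^m`.
-/

lemma distNearestInt_eq_abs_sub {x : ℝ} {k : ℤ} (h : |x - k| ≤ 1 / 2) :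
    distNearestInt x = |x - k| := by
  refine le_antisymm (ciInf_le ⟨0, by rintro _ ⟨n, rfl⟩; positivity⟩ k) (le_ciInf fun j => ?_)
  rcases eq_or_ne j k with rfl | hjk
  · rfl
  · have h1 : (1 : ℝ) ≤ |(j : ℝ) - k| := by exact_mod_cast Int.one_le_abs (sub_ne_zero.mpr hjk)
    have h2 := abs_sub_le (j : ℝ) x k
    rw [abs_sub_comm (j : ℝ) x] at h2
    linarith

lemma distNearestInt_eq_abs_sub_round (x : ℝ) : distNearestInt x = |x - round x| :=
  distNearestInt_eq_abs_sub (abs_sub_round x)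

lemma distNearestInt_nonneg (x : ℝ) : 0 ≤ distNearestInt x := by
  rw [distNearestInt_eq_abs_sub_round]; positivity

lemma distNearestInt_le_half (x : ℝ) : distNearestInt x ≤ 1 / 2 := by
  rw [distNearestInt_eq_abs_sub_round]; exact abs_sub_round x

lemma distNearestInt_add_intCast (x : ℝ) (k : ℤ) : distNearestInt (x + k) = distNearestInt x := by
  have h : x + k - ((round x + k : ℤ) : ℝ) = x - round x := by push_cast; ring
  rw [distNearestInt_eq_abs_sub (k := round x + k) (by rw [h]; exact abs_sub_round x), h,
    distNearestInt_eq_abs_sub_round]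

lemma distNearestInt_intCast_add_div_two {k : ℤ} {y : ℝ} (hy : |y - k| ≤ 1) :
    distNearestInt ((k + y) / 2) = |y - k| / 2 := by
  have h : (k + y) / 2 - k = (y - k) / 2 := by ring
  rw [distNearestInt_eq_abs_sub (k := k)] <;> rw [h, abs_div, abs_two]
  linarith

lemma summable_takagi (x : ℝ) : Summable fun j : ℕ => distNearestInt (2 ^ j * x) / 2 ^ j := by
  refine .of_nonneg_of_le (fun j => div_nonneg (distNearestInt_nonneg _) (by positivity))
    (fun j => div_le_div_of_nonneg_right (distNearestInt_le_half _) (by positivity)) ?_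
  simpa [div_eq_mul_inv, inv_pow] using summable_geometric_two.mul_left (1 / 2 : ℝ)

lemma takagi_eq_add_takagi_two_mul (x : ℝ) :
    takagi x = distNearestInt x + takagi (2 * x) / 2 := by
  rw [takagi, (summable_takagi x).tsum_eq_zero_add, takagi, ← tsum_div_const]
  congr 1
  · simp
  · refine tsum_congr fun j => ?_
    rw [pow_succ, mul_assoc, div_div]

lemma takagi_add_intCast (x : ℝ) (k : ℤ) : takagi (x + k) = takagi x := by
  refine tsum_congr fun j => ?_
  have h : (2 : ℝ) ^ j * (x + k) = 2 ^ j * x + ((2 ^ j * k : ℤ) : ℝ) := by push_cast; ring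
  rw [h, distNearestInt_add_intCast]

-- Both points lie in `[b/2, (b+1)/2]`, on which `distNearestInt` is affine with slope `1 - 2b`.
lemma distNearestInt_add_sub_of_digit (b : Fin 2) {y ε : ℝ} (hy : 0 ≤ y) (hε : 0 ≤ ε)
    (hyε : y + 2 * ε ≤ 1) :
    distNearestInt ((b + y) / 2 + ε) - distNearestInt ((b + y) / 2) = (1 - 2 * b) * ε := by
  have key : ∀ z : ℝ, |z - b| ≤ 1 → distNearestInt ((b + z) / 2) = |z - b| / 2 := fun z hz => by
    exact_mod_cast distNearestInt_intCast_add_div_two (k := (b : ℕ)) (by exact_mod_cast hz)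
  have hb : (b : ℝ) = 0 ∨ (b : ℝ) = 1 := by fin_cases b <;> simp
  rw [show (b + y) / 2 + ε = (b + (y + 2 * ε)) / 2 by ring]
  rcases hb with hb | hb <;> rw [hb] at key ⊢
  · rw [key, key, abs_of_nonneg, abs_of_nonneg] <;>
      first | ring1 | linarith | exact abs_le.mpr ⟨by linarith, by linarith⟩
  · rw [key, key, abs_of_nonpos, abs_of_nonpos] <;>
      first | ring1 | linarith | exact abs_le.mpr ⟨by linarith, by linarith⟩

lemma takagi_add_sub_of_digit (b : Fin 2) {y ε : ℝ} (hy : 0 ≤ y) (hε : 0 ≤ ε)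
    (hyε : y + 2 * ε ≤ 1) :
    takagi ((b + y) / 2 + ε) - takagi ((b + y) / 2)
      = (1 - 2 * b) * ε + (takagi (y + 2 * ε) - takagi y) / 2 := by
  have hshift : ∀ z : ℝ, takagi (2 * ((b + z) / 2)) = takagi z := fun z => by
    rw [← takagi_add_intCast z (b : ℕ)]; congr 1; push_cast; ring
  have hx : (b + y) / 2 + ε = (b + (y + 2 * ε)) / 2 := by ring
  have hσ := distNearestInt_add_sub_of_digit b hy hε hyε
  rw [hx] at hσ ⊢
  rw [takagi_eq_add_takagi_two_mul ((b + (y + 2 * ε)) / 2),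
    takagi_eq_add_takagi_two_mul ((b + y) / 2), hshift, hshift]
  linarith

open Finset

noncomputable def dyadicPrefix (d : ℕ → Fin 2) (n : ℕ) : ℝ :=
  ∑ k ∈ range n, (d k : ℝ) / 2 ^ (k + 1)

def digitCount (d : ℕ → Fin 2) (n : ℕ) : ℕ := ∑ k ∈ range n, (d k : ℕ)

lemma dyadicPrefix_succ (d : ℕ → Fin 2) (n : ℕ) :
    dyadicPrefix d (n + 1) = (d 0 + dyadicPrefix (fun k => d (k + 1)) n) / 2 := by
  rw [dyadicPrefix, dyadicPrefix, sum_range_succ', add_comm, add_div, sum_div]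
  congr 1
  · simp
  · refine sum_congr rfl fun k _ => ?_
    rw [pow_succ _ (k + 1), div_div]

lemma digitCount_succ (d : ℕ → Fin 2) (n : ℕ) :
    digitCount d (n + 1) = d 0 + digitCount (fun k => d (k + 1)) n := by
  rw [digitCount, digitCount, sum_range_succ', add_comm]

lemma dyadicPrefix_nonneg (d : ℕ → Fin 2) (n : ℕ) : 0 ≤ dyadicPrefix d n :=
  sum_nonneg fun _ _ => by positivity

lemma dyadicPrefix_add_le (d : ℕ → Fin 2) (n : ℕ) : dyadicPrefix d n + 1 / 2 ^ n ≤ 1 := by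
  induction n generalizing d with
  | zero => simp [dyadicPrefix]
  | succ n ih =>
    have hd : (d 0 : ℝ) ≤ 1 := by exact_mod_cast Nat.le_of_lt_succ (d 0).isLt
    have := ih fun k => d (k + 1)
    rw [dyadicPrefix_succ, pow_succ, ← div_div]
    linarith

theorem takagi_dyadicPrefix_add_sub (d : ℕ → Fin 2) {n m : ℕ} (hnm : n ≤ m) :
    takagi (dyadicPrefix d n + 1 / 2 ^ m) - takagi (dyadicPrefix d n)
      = (m - 2 * digitCount d n) / 2 ^ m := by
  induction m generalizing n d with
  | zero =>
    obtain rfl : n = 0 := Nat.le_zero.mp hnm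
    simpa [dyadicPrefix, digitCount, sub_eq_zero] using takagi_add_intCast 0 1
  | succ m ih =>
    obtain ⟨b, y, u, hr, hu, hy, hyle, hT⟩ : ∃ (b : Fin 2) (y : ℝ) (u : ℕ),
        dyadicPrefix d n = (b + y) / 2 ∧ digitCount d n = b + u ∧ 0 ≤ y ∧ y + 1 / 2 ^ m ≤ 1 ∧
        takagi (y + 1 / 2 ^ m) - takagi y = (m - 2 * u) / 2 ^ m := by
      cases n with
      | zero =>
        refine ⟨0, 0, 0, by simp [dyadicPrefix], by simp [digitCount], le_rfl, ?_, ?_⟩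
        · rw [zero_add]
          exact div_le_one_of_le₀ (one_le_pow₀ one_le_two) (by positivity)
        · simpa [dyadicPrefix, digitCount] using ih d (Nat.zero_le m)
      | succ n =>
        refine ⟨d 0, _, _, dyadicPrefix_succ d n, digitCount_succ d n, dyadicPrefix_nonneg _ n,
          ?_, ih _ (by omega)⟩
        have := dyadicPrefix_add_le (fun k => d (k + 1)) n
        have := one_div_pow_le_one_div_pow_of_le (one_le_two (α := ℝ)) (Nat.le_of_succ_le_succ hnm)
        linarith
    have h2ε : 2 * (1 / 2 ^ (m + 1) : ℝ) = 1 / 2 ^ m := by rw [pow_succ]; field_simp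
    rw [hr, hu, takagi_add_sub_of_digit b hy (by positivity) (by rwa [h2ε]), h2ε, hT]
    push_cast
    field_simp
    ring

theorem takagi_dyadic_increment (d : ℕ → Fin 2) (n m : ℕ) (hmn : n ≤ m) :
    takagi ((∑ k ∈ Finset.range n, (d k : ℝ) / 2 ^ (k + 1)) + 1 / 2 ^ m)
        - takagi (∑ k ∈ Finset.range n, (d k : ℝ) / 2 ^ (k + 1))
      = ((m : ℝ) - 2 * (∑ k ∈ Finset.range n, (d k : ℕ) : ℕ)) / 2 ^ m :=
  takagi_dyadicPrefix_add_sub d hmn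
end
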